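/- The operator U is the Perron-Frobenius operator of T_θ under γ_θ: for every f ∈ L¹([0,θ], γ_θ) and every Borel set A ⊆ [0,θ], ∫_A Uf dγ_θ = ∫_{T_θ⁻¹(A)} f dγ_θ, where Uf(x) = Σ_{i≥m} P_i(x)·f(u_i(x)). -/

import Mathlib

/-!
On `(0, θ]` the map `T_θ` has the inverse branches `u_i` (`i ≥ m`), whose images `u_i([0, θ))`
are disjoint and cover `(0, θ]`; the digit `i` of `u_i(y)` is `⌊1 / (u_i(y) θ)⌋`. For the density
`ρ(x) = θ / (1 + θx)` of `γ_θ` one has `ρ(u_i x) |u_i'(x)| = ρ(x) P_i(x)`, so the substitution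
`y = u_i(x)` carries `P_i · γ_θ` on `S` to `γ_θ` on `u_i(S)`. Hence
`∫_{T⁻¹A} f dγ = ∑ᵢ ∫_{u_i(A)} f dγ = ∑ᵢ ∫_A P_i · f ∘ u_i dγ = ∫_A Uf dγ`,
the endpoints `0` and `θ` being `γ_θ`-null.
-/

open MeasureTheory Real Set

/-- θ = 1/√m. -/
noncomputable def theta (m : ℕ) : ℝ := 1 / Real.sqrt m

/-- The θ-expansion transformation T_θ(x) = 1/x − θ·⌊1/(xθ)⌋ for x ≠ 0, T_θ(0) = 0. -/
noncomputable def Tmap (m : ℕ) (x : ℝ) : ℝ :=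
  if x = 0 then 0 else 1 / x - theta m * (⌊1 / (x * theta m)⌋ : ℝ)

/-- The invariant measure γ_θ(A) = (1/log(1+θ²)) ∫_A θ/(1+θx) dx on [0,θ]. -/
noncomputable def gammaMeasure (m : ℕ) : Measure ℝ :=
  (ENNReal.ofReal (1 / Real.log (1 + theta m ^ 2))) •
    ((volume.restrict (Icc 0 (theta m))).withDensity
      fun x => ENNReal.ofReal (theta m / (1 + theta m * x)))

/-- u_i(x) = 1/(iθ + x). -/
noncomputable def uMap (m i : ℕ) (x : ℝ) : ℝ := 1 / (i * theta m + x)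

/-- P_i(x) = (1+θx)/((x+iθ)(x+(i+1)θ)). -/
noncomputable def Pfun (m i : ℕ) (x : ℝ) : ℝ :=
  (1 + theta m * x) / ((x + i * theta m) * (x + (i + 1) * theta m))

/-- The Perron-Frobenius operator Uf(x) = Σ_{i≥m} P_i(x)·f(u_i(x)). -/
noncomputable def Uop (m : ℕ) (f : ℝ → ℝ) (x : ℝ) : ℝ :=
  ∑' i : ℕ, Pfun m (i + m) x * f (uMap m (i + m) x)

open Function
open scoped ENNReal

namespace MeasureTheory

variable {α β E : Type*} [MeasurableSpace α] [MeasurableSpace β]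
  [NormedAddCommGroup E] [NormedSpace ℝ E]

/-- `P` is the weight with which the branch `u` enters the transfer operator: `u` transports the
measure `P • μ` on `S` to `ν` on `u '' S`. -/
structure IsWeightedBranch (μ : Measure α) (ν : Measure β) (S : Set α) (u : α → β)
    (P : α → ℝ) : Prop where
  measurableSet : MeasurableSet S
  measurableEmbedding : MeasurableEmbedding u
  measurable_weight : Measurable P
  weight_pos : ∀ x ∈ S, 0 < P x
  measure_image : ∀ T ⊆ S, MeasurableSet T → ν (u '' T) = ∫⁻ x in T, ENNReal.ofReal (P x) ∂μ

namespace IsWeightedBranch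

variable {μ : Measure α} {ν : Measure β} {S : Set α} {u : α → β} {P : α → ℝ}

theorem map_withDensity (h : IsWeightedBranch μ ν S u P) :
    ((μ.restrict S).withDensity fun x => ENNReal.ofReal (P x)).map u = ν.restrict (u '' S) := by
  ext B hB
  have hB' := h.measurableEmbedding.measurable hB
  rw [h.measurableEmbedding.map_apply, withDensity_apply _ hB', Measure.restrict_restrict hB',
    Measure.restrict_apply hB, inter_comm B, ← image_inter_preimage,
    h.measure_image _ inter_subset_left (h.measurableSet.inter hB'), inter_comm (u ⁻¹' B)]

theorem integral_image (h : IsWeightedBranch μ ν S u P) (f : β → E) :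
    ∫ y in u '' S, f y ∂ν = ∫ x in S, P x • f (u x) ∂μ := by
  rw [← h.map_withDensity, h.measurableEmbedding.integral_map,
    integral_withDensity_eq_integral_toReal_smul h.measurable_weight.ennreal_ofReal
      (ae_of_all _ fun _ => ENNReal.ofReal_lt_top)]
  refine setIntegral_congr_fun h.measurableSet fun x hx => ?_
  rw [ENNReal.toReal_ofReal (h.weight_pos x hx).le]

theorem lintegral_image (h : IsWeightedBranch μ ν S u P) (g : β → ℝ≥0∞) :
    ∫⁻ y in u '' S, g y ∂ν = ∫⁻ x in S, ENNReal.ofReal (P x) * g (u x) ∂μ := by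
  rw [← h.map_withDensity, h.measurableEmbedding.lintegral_map,
    lintegral_withDensity_eq_lintegral_mul_non_measurable _ h.measurable_weight.ennreal_ofReal
      (ae_of_all _ fun _ => ENNReal.ofReal_lt_top)]
  rfl

theorem aestronglyMeasurable_smul_comp (h : IsWeightedBranch μ ν S u P) {f : β → E}
    (hf : AEStronglyMeasurable f (ν.restrict (u '' S))) :
    AEStronglyMeasurable (fun x => P x • f (u x)) (μ.restrict S) := by
  rw [← h.map_withDensity, h.measurableEmbedding.aestronglyMeasurable_map_iff] at hf
  have hac : μ.restrict S ≪ (μ.restrict S).withDensity fun x => ENNReal.ofReal (P x) :=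
    withDensity_absolutelyContinuous' h.measurable_weight.ennreal_ofReal.aemeasurable
      ((ae_restrict_iff' h.measurableSet).2 (ae_of_all _ fun x hx => by
        simpa using h.weight_pos x hx))
  exact h.measurable_weight.aestronglyMeasurable.smul (hf.mono_ac hac)

end IsWeightedBranch

theorem setIntegral_tsum_weightedBranch {ι : Type*} [Countable ι] {μ : Measure α} {ν : Measure β}
    {S : Set α} {u : ι → α → β} {P : ι → α → ℝ} (hb : ∀ i, IsWeightedBranch μ ν S (u i) (P i))
    (hdisj : Pairwise (Disjoint on fun i => u i '' S)) {f : β → E}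
    (hf : IntegrableOn f (⋃ i, u i '' S) ν) :
    ∫ x in S, ∑' i, P i x • f (u i x) ∂μ = ∫ y in ⋃ i, u i '' S, f y ∂ν := by
  have hmeas : ∀ i, MeasurableSet (u i '' S) := fun i =>
    (hb i).measurableEmbedding.measurableSet_image.2 (hb i).measurableSet
  have hnorm : ∀ i, ∫⁻ x in S, ‖P i x • f (u i x)‖ₑ ∂μ = ∫⁻ y in u i '' S, ‖f y‖ₑ ∂ν := by
    intro i
    rw [(hb i).lintegral_image]
    refine setLIntegral_congr_fun (hb i).measurableSet fun x hx => ?_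
    rw [enorm_smul, Real.enorm_eq_ofReal ((hb i).weight_pos x hx).le]
  have hfin : ∑' i, ∫⁻ x in S, ‖P i x • f (u i x)‖ₑ ∂μ ≠ ∞ := by
    rw [tsum_congr hnorm, ← lintegral_iUnion hmeas hdisj]
    exact hf.2.ne
  rw [integral_tsum (fun i => (hb i).aestronglyMeasurable_smul_comp
      (hf.1.mono_measure (Measure.restrict_mono (subset_iUnion _ i) le_rfl))) hfin,
    integral_iUnion hmeas hdisj hf]
  exact tsum_congr fun i => ((hb i).integral_image f).symm

end MeasureTheory

noncomputable def gammaDensity (m : ℕ) (x : ℝ) : ℝ := theta m / (1 + theta m * x)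

section ThetaExpansion

variable {m i : ℕ} {x : ℝ}

theorem theta_pos (hm : 0 < m) : 0 < theta m :=
  one_div_pos.2 (Real.sqrt_pos.2 (Nat.cast_pos.2 hm))

theorem natCast_mul_theta_sq (hm : 0 < m) : (m : ℝ) * theta m ^ 2 = 1 := by
  have hm' : (0 : ℝ) < m := Nat.cast_pos.2 hm
  rw [theta, div_pow, one_pow, Real.sq_sqrt hm'.le, mul_one_div_cancel hm'.ne']

theorem natCast_mul_theta_add_pos (hm : 0 < m) (hi : 0 < i) (hx : 0 ≤ x) :
    0 < (i : ℝ) * theta m + x := by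
  have := theta_pos hm
  have : (0 : ℝ) < i := Nat.cast_pos.2 hi
  positivity

theorem uMap_mem_Ioc (hm : 0 < m) (hi : m ≤ i) (hx : 0 ≤ x) :
    uMap m i x ∈ Ioc 0 (theta m) := by
  have hθ := theta_pos hm
  have hd := natCast_mul_theta_add_pos hm (hm.trans_le hi) hx
  have hmi : (m : ℝ) ≤ i := Nat.cast_le.2 hi
  have hmθ := natCast_mul_theta_sq hm
  refine ⟨one_div_pos.2 hd, ?_⟩
  rw [uMap, div_le_iff₀ hd]
  nlinarith

theorem injective_uMap (m i : ℕ) : Function.Injective (uMap m i) := by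
  intro a b h
  simpa [uMap] using h

theorem measurableEmbedding_uMap (m i : ℕ) : MeasurableEmbedding (uMap m i) :=
  (by unfold uMap; fun_prop : Measurable (uMap m i)).measurableEmbedding (injective_uMap m i)

theorem hasDerivAt_uMap (hx : (i : ℝ) * theta m + x ≠ 0) :
    HasDerivAt (uMap m i) (-1 / (i * theta m + x) ^ 2) x := by
  have h := ((hasDerivAt_id' x).const_add ((i : ℝ) * theta m)).inv hx
  unfold uMap
  simp only [one_div]
  exact h

theorem Pfun_pos (hm : 0 < m) (hi : 0 < i) (hx : 0 ≤ x) : 0 < Pfun m i x := by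
  have hθ := theta_pos hm
  have hd := natCast_mul_theta_add_pos hm hi hx
  rw [Pfun]
  exact div_pos (by positivity) (mul_pos (by linarith) (by nlinarith))

theorem gammaDensity_pos (hm : 0 < m) (hx : 0 ≤ x) : 0 < gammaDensity m x := by
  have := theta_pos hm
  unfold gammaDensity
  positivity

theorem gammaDensity_uMap_mul (hm : 0 < m) (hi : 0 < i) (hx : 0 ≤ x) :
    |-1 / ((i : ℝ) * theta m + x) ^ 2| * gammaDensity m (uMap m i x) =
      gammaDensity m x * Pfun m i x := by
  have hθ := theta_pos hm
  have hd := natCast_mul_theta_add_pos hm hi hx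
  have h1 : 1 + theta m * x ≠ 0 := by positivity
  have h2 : (i : ℝ) * theta m + x + theta m ≠ 0 := by positivity
  rw [abs_div, abs_neg, abs_one, abs_of_pos (by positivity), gammaDensity, gammaDensity, Pfun,
    uMap]
  field_simp
  ring

end ThetaExpansion

section GammaMeasure

variable {m i : ℕ}

theorem setLIntegral_gammaMeasure {T : Set ℝ} (hT : MeasurableSet T) (hTθ : T ⊆ Icc 0 (theta m))
    (g : ℝ → ℝ≥0∞) :
    ∫⁻ x in T, g x ∂gammaMeasure m =
      ENNReal.ofReal (1 / Real.log (1 + theta m ^ 2)) *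
        ∫⁻ x in T, ENNReal.ofReal (gammaDensity m x) * g x := by
  rw [gammaMeasure, Measure.restrict_smul, restrict_withDensity hT,
    Measure.restrict_restrict hT, inter_eq_left.2 hTθ, lintegral_smul_measure,
    lintegral_withDensity_eq_lintegral_mul_non_measurable _
      (by fun_prop) (ae_of_all _ fun _ => ENNReal.ofReal_lt_top)]
  rfl

theorem ae_mem_Ioo_gammaMeasure (m : ℕ) : ∀ᵐ x ∂gammaMeasure m, x ∈ Ioo 0 (theta m) := by
  have hac : gammaMeasure m ≪ volume.restrict (Icc 0 (theta m)) :=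
    (withDensity_absolutelyContinuous _ _).smul_left _
  refine hac.ae_le ?_
  rw [Measure.restrict_congr_set Ioo_ae_eq_Icc.symm]
  exact ae_restrict_mem measurableSet_Ioo

theorem isWeightedBranch_uMap (hm : 0 < m) (hi : m ≤ i) {S : Set ℝ} (hS : MeasurableSet S)
    (hSθ : S ⊆ Icc 0 (theta m)) :
    IsWeightedBranch (gammaMeasure m) (gammaMeasure m) S (uMap m i) (Pfun m i) where
  measurableSet := hS
  measurableEmbedding := measurableEmbedding_uMap m i
  measurable_weight := by unfold Pfun; fun_prop
  weight_pos x hx := Pfun_pos hm (hm.trans_le hi) (hSθ hx).1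
  measure_image T hTS hT := by
    have hTθ := hTS.trans hSθ
    have huT : uMap m i '' T ⊆ Icc 0 (theta m) := by
      rintro _ ⟨x, hx, rfl⟩
      exact Ioc_subset_Icc_self (uMap_mem_Ioc hm hi (hTθ hx).1)
    rw [← setLIntegral_one, setLIntegral_gammaMeasure
        ((measurableEmbedding_uMap m i).measurableSet_image.2 hT) huT,
      setLIntegral_gammaMeasure hT hTθ,
      lintegral_image_eq_lintegral_abs_deriv_mul hT
        (fun x hx => (hasDerivAt_uMap (natCast_mul_theta_add_pos hm (hm.trans_le hi)
          (hTθ hx).1).ne').hasDerivWithinAt) (injective_uMap m i).injOn]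
    congr 1
    refine setLIntegral_congr_fun hT fun x hx => ?_
    have h := gammaDensity_uMap_mul hm (hm.trans_le hi) (hTθ hx).1
    rw [mul_one, ← ENNReal.ofReal_mul (abs_nonneg _), h,
      ENNReal.ofReal_mul (gammaDensity_pos hm (hTθ hx).1).le]

end GammaMeasure

section Digits

variable {m i : ℕ} {x y : ℝ}

theorem floor_one_div_uMap_mul_theta (hm : 0 < m) (hi : 0 < i) (hy : y ∈ Ico 0 (theta m)) :
    ⌊1 / (uMap m i y * theta m)⌋₊ = i := by
  have hθ := theta_pos hm
  have hd := natCast_mul_theta_add_pos hm hi hy.1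
  have h : 1 / (uMap m i y * theta m) = i + y / theta m := by
    rw [uMap]
    field_simp
  have h0 : 0 ≤ y / theta m := div_nonneg hy.1 hθ.le
  have h1 : y / theta m < 1 := (div_lt_one hθ).2 hy.2
  rw [h, Nat.floor_eq_iff (by positivity)]
  constructor <;> linarith

theorem Tmap_of_pos (hx : 0 < x) : Tmap m x = 1 / x - theta m * ⌊1 / (x * theta m)⌋₊ := by
  have hθ : 0 ≤ theta m := by unfold theta; positivity
  rw [Tmap, if_neg hx.ne', natCast_floor_eq_intCast_floor
    (one_div_nonneg.2 (mul_nonneg hx.le hθ))]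

theorem Tmap_uMap (hm : 0 < m) (hi : 0 < i) (hy : y ∈ Ico 0 (theta m)) :
    Tmap m (uMap m i y) = y := by
  have hd := natCast_mul_theta_add_pos hm hi hy.1
  rw [Tmap_of_pos (x := uMap m i y) (one_div_pos.2 hd), floor_one_div_uMap_mul_theta hm hi hy,
    uMap, one_div_one_div]
  ring

theorem Tmap_mem_Ico_and_exists_uMap_eq (hm : 0 < m) (hx : x ∈ Ioc 0 (theta m)) :
    Tmap m x ∈ Ico 0 (theta m) ∧ ∃ j : ℕ, uMap m (j + m) (Tmap m x) = x := by
  have hθ := theta_pos hm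
  have hxθ : 0 < x * theta m := mul_pos hx.1 hθ
  set n := ⌊1 / (x * theta m)⌋₊
  have hn : (n : ℝ) ≤ 1 / (x * theta m) := Nat.floor_le (by positivity)
  have hn' : 1 / (x * theta m) < n + 1 := Nat.lt_floor_add_one _
  have hmn : m ≤ n := Nat.le_floor <| by
    rw [le_div_iff₀ hxθ]
    nlinarith [natCast_mul_theta_sq hm, hx.2]
  have hT : Tmap m x = 1 / x - theta m * n := Tmap_of_pos hx.1
  have h1x : 1 / x = 1 / (x * theta m) * theta m := by field_simp
  refine ⟨⟨?_, ?_⟩, n - m, ?_⟩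
  · rw [hT, h1x]
    nlinarith
  · rw [hT, h1x]
    nlinarith
  · rw [Nat.sub_add_cancel hmn, hT, uMap,
      show (n : ℝ) * theta m + (1 / x - theta m * n) = 1 / x by ring, one_div_one_div]

theorem preimage_Tmap_inter_Ioc (hm : 0 < m) (A : Set ℝ) :
    Tmap m ⁻¹' A ∩ Ioc 0 (theta m) = ⋃ j : ℕ, uMap m (j + m) '' (A ∩ Ico 0 (theta m)) := by
  ext x
  simp only [mem_inter_iff, mem_preimage, mem_iUnion, mem_image]
  constructor
  · rintro ⟨hTx, hx⟩
    obtain ⟨hTθ, j, hj⟩ := Tmap_mem_Ico_and_exists_uMap_eq hm hx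
    exact ⟨j, Tmap m x, ⟨hTx, hTθ⟩, hj⟩
  · rintro ⟨j, y, ⟨hyA, hy⟩, rfl⟩
    have hjm := Nat.le_add_left m j
    exact ⟨by rwa [Tmap_uMap hm (hm.trans_le hjm) hy], uMap_mem_Ioc hm hjm hy.1⟩

theorem pairwise_disjoint_image_uMap (hm : 0 < m) {S : Set ℝ} (hS : S ⊆ Ico 0 (theta m)) :
    Pairwise (Disjoint on fun j : ℕ => uMap m (j + m) '' S) := by
  intro j k hjk
  refine disjoint_left.2 ?_
  rintro _ ⟨y, hy, rfl⟩ ⟨z, hz, hzy⟩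
  have hj := floor_one_div_uMap_mul_theta hm (Nat.add_pos_right j hm) (hS hy)
  have hk := floor_one_div_uMap_mul_theta hm (Nat.add_pos_right k hm) (hS hz)
  rw [hzy] at hk
  omega

end Digits

theorem Uop_perron_frobenius_general (m : ℕ) (hm : 2 ≤ m)
    (f : ℝ → ℝ) (hf : Integrable f (gammaMeasure m)) :
    ∀ A ⊆ Icc 0 (theta m), MeasurableSet A →
      ∫ x in A, Uop m f x ∂(gammaMeasure m) =
        ∫ x in (Tmap m) ⁻¹' A, f x ∂(gammaMeasure m) := by
  intro A _ hA
  have hm0 : 0 < m := by omega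
  have hIoo := ae_mem_Ioo_gammaMeasure m
  set S := A ∩ Ico 0 (theta m)
  have hb (j : ℕ) : IsWeightedBranch (gammaMeasure m) (gammaMeasure m) S (uMap m (j + m))
      (Pfun m (j + m)) :=
    isWeightedBranch_uMap hm0 (Nat.le_add_left m j) (hA.inter measurableSet_Ico)
      (inter_subset_right.trans Ico_subset_Icc_self)
  calc ∫ x in A, Uop m f x ∂(gammaMeasure m)
      = ∫ x in S, Uop m f x ∂(gammaMeasure m) :=
        setIntegral_congr_set (inter_ae_eq_left_of_ae_eq_univ
          (Filter.eventuallyEq_univ.2 (hIoo.mono fun _ hx => Ioo_subset_Ico_self hx))).symm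
    _ = ∫ y in ⋃ j : ℕ, uMap m (j + m) '' S, f y ∂(gammaMeasure m) :=
        setIntegral_tsum_weightedBranch hb (pairwise_disjoint_image_uMap hm0 inter_subset_right)
          hf.integrableOn
    _ = ∫ y in Tmap m ⁻¹' A, f y ∂(gammaMeasure m) := by
        rw [← preimage_Tmap_inter_Ioc hm0]
        exact setIntegral_congr_set (inter_ae_eq_left_of_ae_eq_univ
          (Filter.eventuallyEq_univ.2 (hIoo.mono fun _ hx => Ioo_subset_Ioc_self hx)))

/-- U is the Perron-Frobenius operator of T_θ under γ_θ:
∫_A Uf dγ_θ = ∫_{T_θ⁻¹(A)} f dγ_θ for every f ∈ L¹(γ_θ) and Borel A ⊆ [0,θ]. -/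
theorem Uop_perron_frobenius (m : ℕ) (hm : 2 ≤ m) (hns : ¬ IsSquare m)
    (f : ℝ → ℝ) (hf : Integrable f (gammaMeasure m)) :
    ∀ A ⊆ Icc 0 (theta m), MeasurableSet A →
      ∫ x in A, Uop m f x ∂(gammaMeasure m) =
        ∫ x in (Tmap m) ⁻¹' A, f x ∂(gammaMeasure m) :=
  Uop_perron_frobenius_general m hm f hf
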